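/- arXiv:1904.06662 — 5 statements merged into one kernel-verified Lean document; each statement's English description precedes it below -/
import Mathlib

section
/- Let G = (V,E) be a bipartite multigraph and let v ∈ V. Then G is f_v-edge-choosable, where f_v(e) = d_G(v) if the edge e is incident to v, and f_v(e) = χ'(G) otherwise. -/
/-!
Galvin's method. Put `v` on the side `X` of the bipartition and orient the line graph by a proper
edge colouring `ψ`: between two edges with the same `X`-endpoint point towards the larger colour,
between two with the same other endpoint towards the smaller one. Every set of edges has a kernel,
a stable matching found by the Gale–Shapley procedure: `X`-vertices propose along their edge of
largest colour and every other vertex rejects all proposals but the one of smallest colour. By the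
kernel lemma of Bondy, Boppana and Siegel the line graph is choosable from lists longer than the
out-degrees, and the out-degree of `e` is less than any bound on the colours at its `X`-endpoint.
After permuting the colours so that the `d(v)` edges at `v` get the colours below `d(v)`, these
bounds are `d(v)` at `v` and `χ'(G)` elsewhere.
-/

open scoped Classical

/-- A multigraph on vertex type `V` with edge type `E`: each edge has a pair of
distinct endpoints (no loops); multiple edges with the same endpoints are allowed. -/
structure Multigraph (V : Type*) (E : Type*) where
  ends : E → Sym2 V
  not_isDiag : ∀ e, ¬ (ends e).IsDiag

namespace Multigraph

variable {V E : Type*}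

/-- The line graph of a multigraph: vertices are the edges of `G`,
two of them adjacent iff the corresponding edges share an endpoint. -/
def lineGraph (G : Multigraph V E) : SimpleGraph E where
  Adj e q := e ≠ q ∧ ∃ x, x ∈ G.ends e ∧ x ∈ G.ends q
  symm := by
    constructor
    rintro e q ⟨hne, x, he, hq⟩
    exact ⟨hne.symm, x, hq, he⟩
  loopless := ⟨fun e h => h.1 rfl⟩

/-- The degree of a vertex: the number of incident edges. -/
noncomputable def degree (G : Multigraph V E) (x : V) : ℕ :=
  {e : E | x ∈ G.ends e}.ncard

end Multigraph

/-- A simple graph `H` is `f`-choosable if from any assignment of color lists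
of sizes prescribed by `f` one can choose a proper coloring. -/
def Choosable {α : Type*} (H : SimpleGraph α) (f : α → ℕ) : Prop :=
  ∀ A : α → Finset ℕ, (∀ x, (A x).card = f x) →
    ∃ c : α → ℕ, (∀ x, c x ∈ A x) ∧ ∀ ⦃x y⦄, H.Adj x y → c x ≠ c y

/-- The chromatic number of a simple graph, as a natural number. -/
noncomputable def chromNum {α : Type*} (H : SimpleGraph α) : ℕ :=
  sInf {n | H.Colorable n}

/-- The choice number (list chromatic number) of a simple graph. -/
noncomputable def listChromNum {α : Type*} (H : SimpleGraph α) : ℕ :=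
  sInf {n | Choosable H fun _ => n}

/-- The clique number: the size of a maximum clique. -/
noncomputable def cliqNum {α : Type*} (H : SimpleGraph α) : ℕ :=
  sSup {n | ∃ s : Finset α, H.IsNClique n s}

/-- A graph is perfect if every induced subgraph has chromatic number
equal to its clique number. -/
def IsPerfect {α : Type*} (H : SimpleGraph α) : Prop :=
  ∀ s : Set α, chromNum (H.induce s) = cliqNum (H.induce s)

open Finset

section Kernel

variable {α : Type*}

def IsKernel (H : SimpleGraph α) (D : α → α → Prop) (T K : Finset α) : Prop :=
  K ⊆ T ∧ H.IsIndepSet (K : Set α) ∧ ∀ x ∈ T, x ∉ K → ∃ y ∈ K, D x y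

theorem exists_coloring_of_forall_exists_isKernel {H : SimpleGraph α} {D : α → α → Prop}
    (hker : ∀ T, ∃ K, IsKernel H D T K) (S : Finset α) (A : α → Finset ℕ)
    (hA : ∀ x ∈ S, #{y ∈ S | D x y} < #(A x)) :
    ∃ c : α → ℕ, ∀ x ∈ S, c x ∈ A x ∧ ∀ y ∈ S, H.Adj x y → c x ≠ c y := by
  induction S using Finset.strongInduction generalizing A with
  | H S ih =>
  obtain rfl | ⟨x₀, hx₀⟩ := S.eq_empty_or_nonempty
  · exact ⟨fun _ => 0, by simp⟩
  obtain ⟨γ, hγ⟩ := card_pos.1 ((Nat.zero_le _).trans_lt (hA x₀ hx₀))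
  obtain ⟨K, hKT, hKind, hKabs⟩ := hker {x ∈ S | γ ∈ A x}
  have hKS : K ⊆ S := hKT.trans (filter_subset _ _)
  have hK : K.Nonempty := by
    by_cases h : x₀ ∈ K
    · exact ⟨x₀, h⟩
    · obtain ⟨y, hy, -⟩ := hKabs x₀ (mem_filter.2 ⟨hx₀, hγ⟩) h
      exact ⟨y, hy⟩
  -- colour the kernel `K` of the vertices whose list contains `γ` with `γ`, and recurse
  obtain ⟨c, hc⟩ := ih (S \ K) (sdiff_ssubset hKS hK) (fun x => (A x).erase γ) fun x hx => by
    obtain ⟨hxS, hxK⟩ := mem_sdiff.1 hx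
    have hsub : {z ∈ S \ K | D x z} ⊆ {z ∈ S | D x z} := filter_subset_filter _ sdiff_subset
    by_cases hxγ : γ ∈ A x
    · obtain ⟨y, hyK, hxy⟩ := hKabs x (mem_filter.2 ⟨hxS, hxγ⟩) hxK
      have hlt := card_lt_card <| (ssubset_iff_of_subset hsub).2
        ⟨y, mem_filter.2 ⟨hKS hyK, hxy⟩, fun h => (mem_sdiff.1 (mem_filter.1 h).1).2 hyK⟩
      have := hA x hxS
      rw [card_erase_of_mem hxγ]
      omega
    · rw [erase_eq_of_notMem hxγ]
      exact (card_le_card hsub).trans_lt (hA x hxS)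
  have hcS : ∀ x ∈ S, x ∉ K → c x ∈ A x ∧ c x ≠ γ := fun x hxS hxK =>
    (mem_erase.1 ((hc x (mem_sdiff.2 ⟨hxS, hxK⟩)).1)).symm
  refine ⟨fun x => if x ∈ K then γ else c x, fun x hx => ⟨?_, fun y hy hxy => ?_⟩⟩
  · dsimp only
    split_ifs with hxK
    · exact (mem_filter.1 (hKT hxK)).2
    · exact (hcS x hx hxK).1
  · by_cases hxK : x ∈ K <;> by_cases hyK : y ∈ K <;> simp only [hxK, hyK, if_true, if_false]
    · exact absurd hxy (hKind hxK hyK (H.ne_of_adj hxy))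
    · exact (hcS y hy hyK).2.symm
    · exact (hcS x hx hxK).2
    · exact (hc x (mem_sdiff.2 ⟨hx, hxK⟩)).2 y (mem_sdiff.2 ⟨hy, hyK⟩) hxy

theorem choosable_of_forall_exists_isKernel [Fintype α] {H : SimpleGraph α}
    {D : α → α → Prop} (hker : ∀ T, ∃ K, IsKernel H D T K) {f : α → ℕ}
    (hf : ∀ x, #{y | D x y} < f x) : Choosable H f := by
  intro A hA
  obtain ⟨c, hc⟩ := exists_coloring_of_forall_exists_isKernel hker univ A
    fun x _ => hA x ▸ hf x
  exact ⟨c, fun x => (hc x (mem_univ x)).1, fun x y => (hc x (mem_univ x)).2 y (mem_univ y)⟩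

end Kernel

section Galvin

variable {E X Y : Type*} (a : E → X) (b : E → Y) (ψ : E → ℕ)

def bipartiteLineGraph : SimpleGraph E :=
  SimpleGraph.fromRel fun e f => a e = a f ∨ b e = b f

@[simp]
theorem bipartiteLineGraph_adj {e f : E} :
    (bipartiteLineGraph a b).Adj e f ↔ e ≠ f ∧ (a e = a f ∨ b e = b f) := by
  simp only [bipartiteLineGraph, SimpleGraph.fromRel_adj, eq_comm (a := a f), eq_comm (a := b f)]
  tauto

def galvinRel (e f : E) : Prop :=
  a e = a f ∧ ψ e < ψ f ∨ b e = b f ∧ ψ f < ψ e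

noncomputable def favourites (T : Finset E) : Finset E :=
  {e ∈ T | ∀ f ∈ T, a f = a e → ψ f ≤ ψ e}

variable {a b ψ}

theorem exists_mem_favourites {T : Finset E} {e : E} (he : e ∈ T) :
    ∃ g ∈ favourites a ψ T, a g = a e ∧ ψ e ≤ ψ g := by
  obtain ⟨g, hg, hmax⟩ := exists_max_image {f ∈ T | a f = a e} ψ ⟨e, mem_filter.2 ⟨he, rfl⟩⟩
  obtain ⟨hgT, hga⟩ := mem_filter.1 hg
  refine ⟨g, mem_filter.2 ⟨hgT, fun f hf haf => hmax f (mem_filter.2 ⟨hf, haf.trans hga⟩)⟩,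
    hga, hmax e (mem_filter.2 ⟨he, rfl⟩)⟩

theorem IsKernel.of_erase {T K : Finset E} {d₁ d₂ : E} (hd₁ : d₁ ∈ favourites a ψ T)
    (hd₂ : d₂ ∈ T) (hb : b d₁ = b d₂) (hlt : ψ d₁ < ψ d₂)
    (hK : IsKernel (bipartiteLineGraph a b) (galvinRel a b ψ) (T.erase d₂) K) :
    IsKernel (bipartiteLineGraph a b) (galvinRel a b ψ) T K := by
  obtain ⟨hKT, hKind, hKabs⟩ := hK
  refine ⟨hKT.trans (erase_subset _ _), hKind, fun e he heK => ?_⟩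
  obtain rfl | hne := eq_or_ne e d₂
  · by_cases hd₁K : d₁ ∈ K
    · exact ⟨d₁, hd₁K, Or.inr ⟨hb.symm, hlt⟩⟩
    · have hd₁T : d₁ ∈ T.erase e := mem_erase.2 ⟨hlt.ne ∘ congrArg ψ, (mem_filter.1 hd₁).1⟩
      obtain ⟨g, hgK, hg | hg⟩ := hKabs d₁ hd₁T hd₁K
      · exact absurd ((mem_filter.1 hd₁).2 g (mem_of_mem_erase (hKT hgK)) hg.1.symm) hg.2.not_ge
      · exact ⟨g, hgK, Or.inr ⟨hb.symm.trans hg.1, hg.2.trans hlt⟩⟩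
  · exact hKabs e (mem_erase.2 ⟨hne, he⟩) heK

theorem card_galvinRel_lt [Fintype E]
    (hψ : ∀ ⦃e f⦄, (bipartiteLineGraph a b).Adj e f → ψ e ≠ ψ f) {e : E} {B : ℕ}
    (hB : ∀ f, a f = a e → ψ f < B) :
    #{f | galvinRel a b ψ e f} < B := by
  have hsub : ({f | galvinRel a b ψ e f} : Finset E) ⊆
      ({f | a f = a e ∧ ψ e < ψ f} : Finset E) ∪ ({f | b f = b e ∧ ψ f < ψ e} : Finset E) := by
    intro f
    simp only [galvinRel, mem_filter, mem_union, mem_univ, true_and, eq_comm (a := a e),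
      eq_comm (a := b e)]
    exact id
  have hup : #{f | a f = a e ∧ ψ e < ψ f} ≤ #(Ioo (ψ e) B) := by
    refine card_le_card_of_injOn ψ (fun f hf => ?_) fun f hf g hg hfg => ?_
    · obtain ⟨hfa, hlt⟩ := (mem_filter.1 hf).2
      exact mem_Ioo.2 ⟨hlt, hB f hfa⟩
    · by_contra hne
      exact hψ ((bipartiteLineGraph_adj a b).2
        ⟨hne, Or.inl ((mem_filter.1 hf).2.1.trans (mem_filter.1 hg).2.1.symm)⟩) hfg
  have hdown : #{f | b f = b e ∧ ψ f < ψ e} ≤ #(range (ψ e)) := by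
    refine card_le_card_of_injOn ψ (fun f hf => mem_range.2 (mem_filter.1 hf).2.2)
      fun f hf g hg hfg => ?_
    by_contra hne
    exact hψ ((bipartiteLineGraph_adj a b).2
      ⟨hne, Or.inr ((mem_filter.1 hf).2.1.trans (mem_filter.1 hg).2.1.symm)⟩) hfg
  have := hB e rfl
  rw [Nat.card_Ioo] at hup
  rw [card_range] at hdown
  have := (card_le_card hsub).trans (card_union_le _ _)
  omega

theorem isKernel_favourites
    (hψ : ∀ ⦃e f⦄, (bipartiteLineGraph a b).Adj e f → ψ e ≠ ψ f) {T : Finset E}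
    (hP : (favourites a ψ T : Set E).Pairwise fun e f => b e ≠ b f) :
    IsKernel (bipartiteLineGraph a b) (galvinRel a b ψ) T (favourites a ψ T) := by
  refine ⟨filter_subset _ _, fun e he f hf hne hadj => ?_, fun e he heP => ?_⟩
  · rcases ((bipartiteLineGraph_adj a b).1 hadj).2 with haa | hbb
    · exact hψ hadj <| le_antisymm ((mem_filter.1 hf).2 e (mem_filter.1 he).1 haa)
        ((mem_filter.1 he).2 f (mem_filter.1 hf).1 haa.symm)
    · exact hP he hf hne hbb
  · obtain ⟨g, hgP, hga, hle⟩ := exists_mem_favourites he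
    have hadj : (bipartiteLineGraph a b).Adj e g :=
      (bipartiteLineGraph_adj a b).2 ⟨fun h => heP (h ▸ hgP), Or.inl hga.symm⟩
    exact ⟨g, hgP, Or.inl ⟨hga.symm, hle.lt_of_ne (hψ hadj)⟩⟩

theorem exists_isKernel_galvinRel
    (hψ : ∀ ⦃e f⦄, (bipartiteLineGraph a b).Adj e f → ψ e ≠ ψ f) (T : Finset E) :
    ∃ K, IsKernel (bipartiteLineGraph a b) (galvinRel a b ψ) T K := by
  induction T using Finset.strongInduction with
  | H T ih =>
  by_cases hP : (favourites a ψ T : Set E).Pairwise fun e f => b e ≠ b f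
  · exact ⟨_, isKernel_favourites hψ hP⟩
  obtain ⟨d₁, hd₁, d₂, hd₂, hne, hb⟩ : ∃ d₁ ∈ favourites a ψ T, ∃ d₂ ∈ favourites a ψ T,
      d₁ ≠ d₂ ∧ b d₁ = b d₂ := by
    simpa [Set.Pairwise] using hP
  have hd₁T := (mem_filter.1 hd₁).1
  have hd₂T := (mem_filter.1 hd₂).1
  -- the common `b`-endpoint rejects the proposal of larger colour
  rcases (hψ ((bipartiteLineGraph_adj a b).2 ⟨hne, Or.inr hb⟩)).lt_or_gt with hlt | hlt
  · obtain ⟨K, hK⟩ := ih _ (erase_ssubset hd₂T)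
    exact ⟨K, hK.of_erase hd₁ hd₂T hb hlt⟩
  · obtain ⟨K, hK⟩ := ih _ (erase_ssubset hd₁T)
    exact ⟨K, hK.of_erase hd₂ hd₁T hb.symm hlt⟩

theorem choosable_bipartiteLineGraph [Fintype E]
    (hψ : ∀ ⦃e f⦄, (bipartiteLineGraph a b).Adj e f → ψ e ≠ ψ f) {f : E → ℕ}
    (hf : ∀ e g, a g = a e → ψ g < f e) : Choosable (bipartiteLineGraph a b) f :=
  choosable_of_forall_exists_isKernel (exists_isKernel_galvinRel hψ) fun e =>
    card_galvinRel_lt hψ (hf e)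

end Galvin

theorem colorable_chromNum {α : Type*} [Fintype α] (H : SimpleGraph α) :
    H.Colorable (chromNum H) :=
  Nat.sInf_mem (s := {n | H.Colorable n}) ⟨_, H.colorable_of_fintype⟩

theorem SimpleGraph.Colorable.exists_coloring_lt_card_of_isClique {α : Type*}
    {H : SimpleGraph α} {k : ℕ} (hk : H.Colorable k) {s : Finset α}
    (hs : H.IsClique (s : Set α)) : ∃ C : H.Coloring (Fin k), ∀ x ∈ s, (C x : ℕ) < #s := by
  obtain ⟨C⟩ := hk
  have hinj : Set.InjOn C s := fun x hx y hy h => by_contra fun hne => C.valid (hs hx hy hne) h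
  have hcard : #(s.image C) = #{i : Fin k | i < #s} := by
    have := card_le_univ (s.image C)
    rw [card_image_of_injOn hinj, Fintype.card_fin] at this
    rw [card_image_of_injOn hinj, Fin.card_filter_val_lt, min_eq_right this]
  let σ := (Finset.equivOfCardEq hcard).extendSubtype
  refine ⟨Coloring.mk (σ ∘ C) fun h => σ.injective.ne (C.valid h), fun x hx => ?_⟩
  show (σ (C x) : ℕ) < #s
  simpa using (Finset.equivOfCardEq hcard).extendSubtype_mem (C x) (mem_image_of_mem C hx)

namespace Multigraph

variable {V E : Type*}

theorem degree_eq_card [Fintype E] (G : Multigraph V E) (x : V) :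
    G.degree x = #{e | x ∈ G.ends e} := by
  rw [degree, ← Set.ncard_coe_finset, coe_filter_univ]

theorem exists_lineGraph_eq_bipartiteLineGraph (G : Multigraph V E)
    (hbip : ∃ X : Set V, ∀ (e : E) (u w : V), G.ends e = s(u, w) → (u ∈ X ↔ w ∉ X)) (v : V) :
    ∃ a b : E → V, G.lineGraph = bipartiteLineGraph a b ∧ ∀ e, v ∈ G.ends e ↔ a e = v := by
  obtain ⟨X, hX, hvX⟩ : ∃ X : Set V,
      (∀ (e : E) (u w : V), G.ends e = s(u, w) → (u ∈ X ↔ w ∉ X)) ∧ v ∈ X := by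
    obtain ⟨X, hX⟩ := hbip
    by_cases hv : v ∈ X
    · exact ⟨X, hX, hv⟩
    · refine ⟨Xᶜ, fun e u w h => ?_, hv⟩
      simpa only [Set.mem_compl_iff] using not_congr (hX e u w h)
  have hends : ∀ e, ∃ u w, G.ends e = s(u, w) ∧ u ∈ X ∧ w ∉ X := by
    intro e
    induction h : G.ends e using Sym2.ind with
    | h u w =>
    by_cases hu : u ∈ X
    · exact ⟨u, w, rfl, hu, (hX e u w h).1 hu⟩
    · exact ⟨w, u, Sym2.eq_swap, by simpa [hu] using hX e u w h, hu⟩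
  choose a b hab ha hb using hends
  have hmem : ∀ e z, z ∈ G.ends e ↔ z = a e ∨ z = b e := fun e z => by rw [hab, Sym2.mem_iff]
  have ha_ne_b : ∀ e f, a e ≠ b f := fun e f h => hb f (h ▸ ha e)
  refine ⟨a, b, ?_, fun e => ?_⟩
  · ext e f
    simp only [lineGraph, bipartiteLineGraph_adj, hmem]
    refine and_congr_right fun _ => ⟨?_, ?_⟩
    · rintro ⟨x, rfl | rfl, h | h⟩
      exacts [Or.inl h, absurd h (ha_ne_b e f), absurd h.symm (ha_ne_b f e), Or.inr h]
    · rintro (h | h)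
      exacts [⟨a e, Or.inl rfl, Or.inl h⟩, ⟨b e, Or.inr rfl, Or.inr h⟩]
  · have : v ≠ b e := fun h => hb e (h ▸ hvX)
    simp [hmem, this, eq_comm]

end Multigraph

theorem stmt_2_general {V E : Type*} [Fintype E] (G : Multigraph V E)
    (hbip : ∃ X : Set V, ∀ (e : E) (u w : V), G.ends e = s(u, w) → (u ∈ X ↔ w ∉ X))
    (v : V) :
    Choosable (Multigraph.lineGraph G)
      (fun e => if v ∈ G.ends e then G.degree v else chromNum (Multigraph.lineGraph G)) := by
  obtain ⟨a, b, hG, hv⟩ := G.exists_lineGraph_eq_bipartiteLineGraph hbip v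
  have hclique : (bipartiteLineGraph a b).IsClique ({e | a e = v} : Finset E) :=
    fun e he f hf hne => (bipartiteLineGraph_adj a b).2 ⟨hne, Or.inl (by simp_all)⟩
  rw [hG]
  obtain ⟨C, hC⟩ := (colorable_chromNum _).exists_coloring_lt_card_of_isClique hclique
  refine choosable_bipartiteLineGraph (ψ := fun e => C e)
    (fun e f hadj => Fin.val_injective.ne (C.valid hadj)) fun e g hg => ?_
  simp only [hv, G.degree_eq_card]
  split_ifs with he
  · exact hC g (by simpa [hg] using he)
  · exact (C g).isLt

/-- For a bipartite multigraph `G` and any vertex `v`, `G` is `f_v`-edge-choosable,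
where `f_v(e) = d_G(v)` for edges incident to `v` and `f_v(e) = χ'(G)` otherwise. -/
theorem stmt_2 {V E : Type*} [Fintype V] [Fintype E] (G : Multigraph V E)
    (hbip : ∃ X : Set V, ∀ (e : E) (u w : V), G.ends e = s(u, w) → (u ∈ X ↔ w ∉ X))
    (v : V) :
    Choosable (Multigraph.lineGraph G)
      (fun e => if v ∈ G.ends e then G.degree v else chromNum (Multigraph.lineGraph G)) :=
  stmt_2_general G hbip v
end

section
/- Let D be a finite digraph (no loops, at most one arc in each direction between any two vertices) in which every induced subdigraph has a kernel, and let f : V → ℕ satisfy f(v) > d_out(v) for every vertex v, where d_out(v) is the outdegree of v. Then the underlying undirected graph of D is f-choosable. -/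
open scoped Classical

/-- A kernel of the subdigraph of `D` induced on `S`: an independent subset `K` of `S`
such that every vertex of `S` outside `K` sends an arc to some vertex of `K`. -/
def HasKernelOn {α : Type*} (D : α → α → Prop) (S : Set α) : Prop :=
  ∃ K : Set α, K ⊆ S ∧ (∀ u ∈ K, ∀ w ∈ K, u ≠ w → ¬ D u w) ∧
    ∀ x ∈ S, x ∉ K → ∃ u ∈ K, D x u

/-- The underlying undirected graph of a digraph: an edge whenever there is an arc
in at least one direction. -/
def underlyingGraph {α : Type*} (D : α → α → Prop) : SimpleGraph α where
  Adj u w := u ≠ w ∧ (D u w ∨ D w u)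
  symm := by
    constructor
    rintro u w ⟨hne, h⟩
    exact ⟨hne.symm, h.symm⟩
  loopless := ⟨fun u h => h.1 rfl⟩

/-- `D` is an orientation of the simple graph `H`: a loopless digraph whose
underlying graph is `H` (pairs of opposite arcs give a single edge). -/
def IsOrientation {α : Type*} (H : SimpleGraph α) (D : α → α → Prop) : Prop :=
  (∀ x, ¬ D x x) ∧ ∀ x y, (D x y ∨ D y x) ↔ H.Adj x y

/-- A digraph is normal if every clique (set of vertices pairwise joined by at least
one arc) has a kernel. -/
def IsNormal {α : Type*} (D : α → α → Prop) : Prop :=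
  ∀ C : Set α, (∀ x ∈ C, ∀ y ∈ C, x ≠ y → D x y ∨ D y x) → HasKernelOn D C

/-- A simple graph is solvable if every normal orientation of it has a kernel. -/
def Solvable {α : Type*} (H : SimpleGraph α) : Prop :=
  ∀ D : α → α → Prop, IsOrientation H D → IsNormal D → HasKernelOn D Set.univ

/-!
Induction on the vertex set. Pick a colour `γ` occurring in some list and a kernel `K` of the
subdigraph induced by the vertices whose list contains `γ`. Colour `K` with `γ` (it is independent),
delete `K`, and delete `γ` from the remaining lists. A remaining vertex that loses `γ` is outside
the kernel, so it has an out-neighbour in `K`: its outdegree drops along with its list, and the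
inequality `outdegree < list size` survives.
-/

open Finset

section ListColoring

variable {α β : Type*} {D : α → α → Prop}

def IsListColoringOn (D : α → α → Prop) (T : Finset α) (A : α → Finset β) (c : α → β) : Prop :=
  (∀ x ∈ T, c x ∈ A x) ∧ ∀ x ∈ T, ∀ y ∈ T, x ≠ y → D x y → c x ≠ c y

lemma card_filter_sdiff_kernel_lt {T : Finset α} {K : Set α} {A : α → Finset β} {γ : β}
    (hA : ∀ x ∈ T, #{y ∈ T | D x y} < #(A x)) (hKS : K ⊆ {x | x ∈ T ∧ γ ∈ A x})
    (hKabs : ∀ x ∈ {x | x ∈ T ∧ γ ∈ A x}, x ∉ K → ∃ u ∈ K, D x u) :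
    ∀ x ∈ {x ∈ T | x ∉ K}, #{y ∈ {x ∈ T | x ∉ K} | D x y} < #((A x).erase γ) := by
  intro x hx
  obtain ⟨hxT, hxK⟩ := mem_filter.mp hx
  have hmono : {y ∈ {x ∈ T | x ∉ K} | D x y} ⊆ {y ∈ T | D x y} :=
    filter_subset_filter _ (filter_subset _ T)
  by_cases hγ : γ ∈ A x
  · obtain ⟨u, huK, hxu⟩ := hKabs x ⟨hxT, hγ⟩ hxK
    have hu : u ∈ {y ∈ T | D x y} := mem_filter.mpr ⟨(hKS huK).1, hxu⟩
    have hsub : {y ∈ {x ∈ T | x ∉ K} | D x y} ⊆ {y ∈ T | D x y}.erase u := fun y hy =>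
      mem_erase.mpr ⟨fun hyu => (mem_filter.mp (mem_filter.mp hy).1).2 (hyu ▸ huK), hmono hy⟩
    calc #{y ∈ {x ∈ T | x ∉ K} | D x y}
        ≤ #{y ∈ T | D x y} - 1 := (card_le_card hsub).trans_eq (card_erase_of_mem hu)
      _ < #(A x) - 1 := by have := hA x hxT; have := card_pos.mpr ⟨u, hu⟩; omega
      _ = #((A x).erase γ) := (card_erase_of_mem hγ).symm
  · rw [erase_eq_of_notMem hγ]
    exact (card_le_card hmono).trans_lt (hA x hxT)

lemma IsListColoringOn.extend_by_kernel {T : Finset α} {K : Set α} {A : α → Finset β} {γ : β}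
    {c : α → β} (hc : IsListColoringOn D {x ∈ T | x ∉ K} (fun x => (A x).erase γ) c)
    (hKS : K ⊆ {x | x ∈ T ∧ γ ∈ A x}) (hKind : ∀ u ∈ K, ∀ w ∈ K, u ≠ w → ¬ D u w) :
    IsListColoringOn D T A (fun x => if x ∈ K then γ else c x) := by
  have hmem : ∀ x ∈ T, x ∉ K → c x ∈ (A x).erase γ := fun x hxT hxK =>
    hc.1 x (mem_filter.mpr ⟨hxT, hxK⟩)
  refine ⟨fun x hxT => ?_, fun x hxT y hyT hne hxy => ?_⟩
  · by_cases hxK : x ∈ K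
    · simpa [hxK] using (hKS hxK).2
    · simpa [hxK] using mem_of_mem_erase (hmem x hxT hxK)
  · by_cases hxK : x ∈ K <;> by_cases hyK : y ∈ K <;> simp only [hxK, hyK, if_true, if_false]
    · exact absurd hxy (hKind x hxK y hyK hne)
    · exact (ne_of_mem_erase (hmem y hyT hyK)).symm
    · exact ne_of_mem_erase (hmem x hxT hxK)
    · exact hc.2 x (mem_filter.mpr ⟨hxT, hxK⟩) y (mem_filter.mpr ⟨hyT, hyK⟩) hne hxy

theorem exists_isListColoringOn_of_forall_hasKernelOn [Nonempty β]
    (hker : ∀ S : Set α, HasKernelOn D S) (T : Finset α) (A : α → Finset β)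
    (hA : ∀ x ∈ T, #{y ∈ T | D x y} < #(A x)) : ∃ c, IsListColoringOn D T A c := by
  induction T using Finset.strongInduction generalizing A with
  | H T ih =>
  rcases T.eq_empty_or_nonempty with rfl | ⟨x₀, hx₀⟩
  · exact ⟨fun _ => Classical.arbitrary β, by simp [IsListColoringOn]⟩
  obtain ⟨γ, hγ⟩ : (A x₀).Nonempty := card_pos.mp (Nat.zero_lt_of_lt (hA x₀ hx₀))
  obtain ⟨K, hKS, hKind, hKabs⟩ := hker {x | x ∈ T ∧ γ ∈ A x}
  have hK : K.Nonempty := by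
    by_cases hx₀K : x₀ ∈ K
    · exact ⟨x₀, hx₀K⟩
    · obtain ⟨u, huK, -⟩ := hKabs x₀ ⟨hx₀, hγ⟩ hx₀K
      exact ⟨u, huK⟩
  obtain ⟨u, huK⟩ := hK
  have hssub : {x ∈ T | x ∉ K} ⊂ T := filter_ssubset.mpr ⟨u, (hKS huK).1, not_not.mpr huK⟩
  obtain ⟨c, hc⟩ := ih _ hssub (fun x => (A x).erase γ) (card_filter_sdiff_kernel_lt hA hKS hKabs)
  exact ⟨_, hc.extend_by_kernel hKS hKind⟩

end ListColoring

theorem stmt_6_general {α : Type*} [Fintype α] (D : α → α → Prop)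
    (hker : ∀ S : Set α, HasKernelOn D S) (f : α → ℕ)
    (hf : ∀ x, {y | D x y}.ncard < f x) :
    Choosable (underlyingGraph D) f := by
  intro A hA
  obtain ⟨c, hcA, hc⟩ := exists_isListColoringOn_of_forall_hasKernelOn hker univ A fun x _ => by
    simpa [hA x, ← Set.ncard_coe_finset] using hf x
  refine ⟨c, fun x => hcA x (mem_univ x), fun x y ⟨hne, hxy⟩ => ?_⟩
  rcases hxy with hxy | hyx
  · exact hc x (mem_univ x) y (mem_univ y) hne hxy
  · exact (hc y (mem_univ y) x (mem_univ x) hne.symm hyx).symm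

/-- **Galvin's kernel lemma.** If every induced subdigraph of a finite loopless
digraph `D` has a kernel and `f` exceeds every outdegree, then the underlying
graph of `D` is `f`-choosable. -/
theorem stmt_6 {α : Type*} [Fintype α] (D : α → α → Prop) (hirr : ∀ x, ¬ D x x)
    (hker : ∀ S : Set α, HasKernelOn D S) (f : α → ℕ)
    (hf : ∀ x, {y | D x y}.ncard < f x) :
    Choosable (underlyingGraph D) f :=
  stmt_6_general D hker f hf
end

section
/- Every induced subgraph of a solvable graph is solvable. -/
open scoped Classical

/-! Extend a normal orientation `D` of `H[s]` to all of `H` by letting every edge with an endpoint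
outside `s` point away from that endpoint (both ways if both endpoints are outside). No arc then
leaves `s`, so a kernel of the extension restricts to a kernel of `D`; and a clique of the extension
either meets `s`, where a kernel of its trace on `s` absorbs the rest of it, or lies outside `s`,
where all arcs are symmetric and any single vertex is a kernel. -/

section Kernels

variable {α : Type*}

theorem HasKernelOn.of_subset_of_arcs_mem {D : α → α → Prop} {S T : Set α}
    (h : HasKernelOn D S) (hTS : T ⊆ S) (hT : ∀ x ∈ T, ∀ y ∈ S, D x y → y ∈ T) :
    HasKernelOn D T := by
  obtain ⟨K, hKS, hKind, hKabs⟩ := h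
  refine ⟨K ∩ T, Set.inter_subset_right, fun u hu w hw => hKind u hu.1 w hw.1, ?_⟩
  intro x hx hxK
  obtain ⟨u, hu, hxu⟩ := hKabs x (hTS hx) fun h => hxK ⟨h, hx⟩
  exact ⟨u, ⟨hu, hT x hx u (hKS hu) hxu⟩, hxu⟩

theorem hasKernelOn_restrict_iff (D : α → α → Prop) (s : Set α) (T : Set s) :
    HasKernelOn (fun a b : s => D a b) T ↔ HasKernelOn D (Subtype.val '' T) := by
  constructor
  · rintro ⟨K, hKT, hKind, hKabs⟩
    refine ⟨Subtype.val '' K, Set.image_mono hKT, ?_, ?_⟩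
    · rintro _ ⟨a, ha, rfl⟩ _ ⟨b, hb, rfl⟩ hab
      exact hKind a ha b hb fun h => hab (congrArg _ h)
    · rintro _ ⟨a, ha, rfl⟩ haK
      obtain ⟨u, hu, hau⟩ := hKabs a ha fun h => haK ⟨a, h, rfl⟩
      exact ⟨u, ⟨u, hu, rfl⟩, hau⟩
  · rintro ⟨K, hKT, hKind, hKabs⟩
    refine ⟨Subtype.val ⁻¹' K, fun a ha => ?_, ?_, ?_⟩
    · obtain ⟨b, hb, hba⟩ := hKT ha
      exact Subtype.ext hba ▸ hb
    · exact fun a ha b hb hab => hKind a ha b hb fun h => hab (Subtype.ext h)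
    · intro a ha haK
      obtain ⟨u, hu, hau⟩ := hKabs a ⟨a, ha, rfl⟩ haK
      obtain ⟨b, -, rfl⟩ := hKT hu
      exact ⟨b, hu, hau⟩

theorem hasKernelOn_restrict_univ_iff (D : α → α → Prop) (s : Set α) :
    HasKernelOn (fun a b : s => D a b) Set.univ ↔ HasKernelOn D s := by
  rw [hasKernelOn_restrict_iff, Subtype.coe_image_univ]

theorem Set.Nonempty.of_absorbing {D : α → α → Prop} {S K : Set α} (hS : S.Nonempty)
    (hK : ∀ x ∈ S, x ∉ K → ∃ u ∈ K, D x u) : K.Nonempty := by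
  obtain ⟨x, hx⟩ := hS
  by_cases hxK : x ∈ K
  · exact ⟨x, hxK⟩
  · obtain ⟨u, hu, -⟩ := hK x hx hxK
    exact ⟨u, hu⟩

theorem hasKernelOn_singleton_of_symmetric_clique {D : α → α → Prop} {C : Set α} {z : α}
    (hz : z ∈ C) (hC : ∀ x ∈ C, ∀ y ∈ C, x ≠ y → D x y ∨ D y x)
    (hsymm : ∀ x ∈ C, ∀ y ∈ C, D x y → D y x) : HasKernelOn D C := by
  refine ⟨{z}, Set.singleton_subset_iff.mpr hz, ?_, ?_⟩
  · rintro u rfl w rfl h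
    exact absurd rfl h
  · intro x hx hxz
    refine ⟨z, rfl, ?_⟩
    rcases hC x hx z hz hxz with h | h
    · exact h
    · exact hsymm z hz x hx h

theorem IsNormal.of_restrict {D : α → α → Prop} {s : Set α}
    (hN : IsNormal fun a b : s => D a b) (hout : ∀ x ∈ s, ∀ y ∉ s, ¬ D x y)
    (hsymm : ∀ x ∉ s, ∀ y ∉ s, D x y → D y x) : IsNormal D := by
  intro C hC
  by_cases hCs : (C ∩ s).Nonempty
  · have hclique : ∀ a ∈ Subtype.val ⁻¹' C, ∀ b ∈ Subtype.val ⁻¹' C, a ≠ b →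
        (fun a b : s => D a b) a b ∨ (fun a b : s => D a b) b a :=
      fun a ha b hb hab => hC a ha b hb fun h => hab (Subtype.ext h)
    have hker := (hasKernelOn_restrict_iff D s _).mp (hN _ hclique)
    rw [Subtype.image_preimage_coe] at hker
    obtain ⟨K, hKsub, hKind, hKabs⟩ := hker
    obtain ⟨u, hu⟩ := (Set.inter_comm C s ▸ hCs).of_absorbing hKabs
    refine ⟨K, fun x hx => (hKsub hx).2, hKind, fun x hx hxK => ?_⟩
    by_cases hxs : x ∈ s
    · exact hKabs x ⟨hxs, hx⟩ hxK
    · refine ⟨u, hu, ?_⟩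
      have hxu : x ≠ u := fun h => hxK (h ▸ hu)
      exact (hC x hx u (hKsub hu).2 hxu).resolve_right (hout u (hKsub hu).1 x hxs)
  · have hCs : ∀ x ∈ C, x ∉ s := fun x hx hxs => hCs ⟨x, hx, hxs⟩
    rcases C.eq_empty_or_nonempty with rfl | ⟨z, hz⟩
    · exact ⟨∅, subset_rfl, by simp, by simp⟩
    · exact hasKernelOn_singleton_of_symmetric_clique hz hC
        fun x hx y hy => hsymm x (hCs x hx) y (hCs y hy)

end Kernels

section Extension

variable {α : Type*} (H : SimpleGraph α) (s : Set α) (D : s → s → Prop)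

def extendOrientation : α → α → Prop := fun x y =>
  if hx : x ∈ s then ∃ hy : y ∈ s, D ⟨x, hx⟩ ⟨y, hy⟩ else H.Adj x y

variable {H s D}

@[simp]
theorem extendOrientation_coe (a b : s) : extendOrientation H s D a b ↔ D a b := by
  simp [extendOrientation]

theorem restrict_extendOrientation : (fun a b : s => extendOrientation H s D a b) = D :=
  funext₂ fun a b => propext (extendOrientation_coe a b)

theorem extendOrientation_of_notMem {x : α} (hx : x ∉ s) (y : α) :
    extendOrientation H s D x y ↔ H.Adj x y := by
  simp [extendOrientation, hx]

theorem not_extendOrientation {x y : α} (hx : x ∈ s) (hy : y ∉ s) :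
    ¬ extendOrientation H s D x y := by
  simp [extendOrientation, hx, hy]

theorem isOrientation_extendOrientation (hD : IsOrientation (H.induce s) D) :
    IsOrientation H (extendOrientation H s D) := by
  refine ⟨fun x => ?_, fun x y => ?_⟩
  · by_cases hx : x ∈ s
    · lift x to s using hx
      simpa using hD.1 x
    · simp [extendOrientation_of_notMem hx]
  · by_cases hx : x ∈ s <;> by_cases hy : y ∈ s
    · lift x to s using hx
      lift y to s using hy
      simpa using hD.2 x y
    · simp [not_extendOrientation hx hy, extendOrientation_of_notMem hy, H.adj_comm]
    · simp [not_extendOrientation hy hx, extendOrientation_of_notMem hx]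
    · simp [extendOrientation_of_notMem hx, extendOrientation_of_notMem hy, H.adj_comm]

theorem isNormal_extendOrientation (hN : IsNormal D) : IsNormal (extendOrientation H s D) :=
  IsNormal.of_restrict (restrict_extendOrientation ▸ hN)
    (fun _ hx _ hy => not_extendOrientation hx hy) fun x hx y hy h => by
      rw [extendOrientation_of_notMem hx] at h
      exact (extendOrientation_of_notMem hy x).mpr h.symm

end Extension

theorem stmt_7_general {α : Type*} (H : SimpleGraph α) (hs : Solvable H)
    (s : Set α) : Solvable (H.induce s) := by
  intro D hD hN
  have hK := hs _ (isOrientation_extendOrientation hD) (isNormal_extendOrientation hN)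
  have hKs : HasKernelOn (extendOrientation H s D) s :=
    hK.of_subset_of_arcs_mem (Set.subset_univ s) fun x hx y _ hxy =>
      by_contra fun hy => not_extendOrientation hx hy hxy
  rw [← restrict_extendOrientation (H := H) (D := D)]
  exact (hasKernelOn_restrict_univ_iff _ s).mpr hKs

/-- Every induced subgraph of a solvable graph is solvable. -/
theorem stmt_7 {α : Type*} [Fintype α] (H : SimpleGraph α) (hs : Solvable H)
    (s : Set α) : Solvable (H.induce s) :=
  stmt_7_general H hs s
end

section
/- Every biconnected component (block) of a line perfect multigraph is either a bipartite multigraph, a K_4 with possibly multiple edges (four vertices, each pair adjacent), or a K_{1,1,n} with possibly multiple edges (n+2 vertices v_1,…,v_n,a,b such that {v_1,…,v_n} is an independent set and {v_i,a,b} is a clique for each i = 1,…,n). -/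
/-!
Let `S` be the simple graph underlying a block of `G`. An odd cycle `v₀ ⋯ v₂ₖ` of `S` of length
at least five yields, by picking one edge of `G` between each pair of consecutive vertices, an
induced odd hole in `L(G)`, which has chromatic number 3 but clique number 2; so every odd cycle
of `S` is a triangle.

If `S` is not bipartite it has an odd cycle, hence a triangle `abc`. Take a path from a vertex `x`
outside the triangle that meets the triangle only at its end and avoids a prescribed vertex (there
are no cut vertices). Closing it through the triangle in two ways gives cycles of consecutive
lengths, and the odd one must be a triangle. So every outside vertex adjacent to the triangle is
adjacent to two of its vertices and to nothing outside it, and by connectivity every outside vertex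
is of this kind. Finally, an odd five-cycle appears as soon as two outside vertices use different
pairs of triangle vertices, or one of them sees all of `a, b, c` while another outside vertex
exists; so the block is a `K₄` or a `K_{1,1,n}`.
-/

open scoped Classical

namespace Multigraph

variable {V E : Type*}

/-- The simple graph on `V` induced by the edges of `G` belonging to `F`. -/
def simpleOn (G : Multigraph V E) (F : Set E) : SimpleGraph V where
  Adj u w := ∃ e ∈ F, G.ends e = s(u, w)
  symm := by
    constructor
    rintro u w ⟨e, heF, he⟩
    exact ⟨e, heF, he.trans (Sym2.eq_swap)⟩
  loopless := by
    constructor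
    rintro u ⟨e, _, he⟩
    exact G.not_isDiag e (by rw [he]; exact Sym2.mk_isDiag_iff.mpr rfl)

/-- The support of an edge set `F`: all vertices incident to some edge of `F`. -/
def supp (G : Multigraph V E) (F : Set E) : Set V := {x | ∃ e ∈ F, x ∈ G.ends e}

/-- There is an edge of `F` joining `u` and `w`. -/
def EdgeBetweenOn (G : Multigraph V E) (F : Set E) (u w : V) : Prop :=
  ∃ e ∈ F, G.ends e = s(u, w)

/-- The sub-multigraph spanned by the edge set `F` (on its support vertices)
is biconnected: connected and with no cut vertex. -/
def IsBiconnectedOn (G : Multigraph V E) (F : Set E) : Prop :=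
  ((G.simpleOn F).induce (G.supp F)).Connected ∧
    ∀ x : V, ((G.simpleOn F).induce (G.supp F \ {x})).Preconnected

/-- A block (biconnected component) of `G`: a maximal edge set spanning a
biconnected sub-multigraph. -/
def IsBlock (G : Multigraph V E) (F : Set E) : Prop :=
  G.IsBiconnectedOn F ∧ ∀ F' : Set E, F ⊆ F' → G.IsBiconnectedOn F' → F' = F

end Multigraph

namespace SimpleGraph

variable {V : Type*} {S : SimpleGraph V}

namespace Walk

lemma exists_loop_of_not_isPath {x y : V} (p : S.Walk x y) (hp : ¬ p.IsPath) :
    ∃ (v : V) (q : S.Walk v v) (p' : S.Walk x y), 0 < q.length ∧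
      p'.length + q.length = p.length := by
  induction p with
  | nil => exact absurd IsPath.nil hp
  | @cons x x' y h p ih =>
    by_cases hpath : p.IsPath
    · have hx : x ∈ p.support := by
        by_contra hx
        exact hp (hpath.cons hx)
      refine ⟨x, cons h (p.takeUntil x hx), p.dropUntil x hx, by simp, ?_⟩
      have := congrArg length (p.take_spec hx)
      simp only [length_append] at this
      simp only [length_cons]
      omega
    · obtain ⟨v, q, p', hq, hlen⟩ := ih hpath
      exact ⟨v, q, cons h p', hq, by simp only [length_cons]; omega⟩

lemma exists_isCycle_odd_length {u : V} (c : S.Walk u u) (hc : Odd c.length) :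
    ∃ (v : V) (d : S.Walk v v), d.IsCycle ∧ Odd d.length := by
  induction h : c.length using Nat.strong_induction_on generalizing u with
  | _ n ih =>
  cases c with
  | nil => simp at hc
  | @cons _ u' _ hadj p =>
    by_cases hp : p.IsPath
    · refine ⟨u, cons hadj p, (cons_isCycle_iff p hadj).mpr ⟨hp, fun he => ?_⟩, hc⟩
      have := hp.length_eq_one_of_mem_edges (Sym2.eq_swap ▸ he)
      simp only [length_cons, this] at hc
      exact absurd hc (by decide)
    · obtain ⟨v, q, p', hq, hlen⟩ := p.exists_loop_of_not_isPath hp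
      have hsum : (cons hadj p').length + q.length = n := by
        simp only [length_cons] at h ⊢
        omega
      rw [h, ← hsum, Nat.odd_add] at hc
      rcases Nat.even_or_odd q.length with hqe | hqo
      · exact ih _ (by omega) _ (hc.mpr hqe) rfl
      · exact ih _ (by simp only [length_cons] at hsum; omega) q hqo rfl

lemma exists_isPath_first_mem {x y : V} {T : Set V} (w : S.Walk x y) (hy : y ∈ T) :
    ∃ t ∈ T, ∃ Q : S.Walk x t, Q.IsPath ∧ Q.support ⊆ w.support ∧
      ∀ v ∈ Q.support, v ∈ T → v = t := by
  induction w with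
  | nil => exact ⟨_, hy, nil, IsPath.nil, by simp, by simp⟩
  | @cons x x' y h w ih =>
    by_cases hx : x ∈ T
    · exact ⟨x, hx, nil, IsPath.nil, by simp, by simp⟩
    obtain ⟨t, ht, Q, -, hQw, hQT⟩ := ih hy
    refine ⟨t, ht, (cons h Q).bypass, bypass_isPath _,
      List.Subset.trans (support_bypass_subset_support _) ?_, fun v hv hvT => ?_⟩
    · simpa using List.cons_subset_cons x hQw
    · rcases List.mem_cons.mp (support_bypass_subset_support _ hv) with rfl | hv
      · exact absurd hvT hx
      · exact hQT v hv hvT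

lemma IsPath.start_notMem_support_tail {x y : V} {Q : S.Walk x y} (hQ : Q.IsPath) :
    x ∉ Q.support.tail :=
  (List.nodup_cons.mp (Q.cons_tail_support ▸ hQ.support_nodup)).1

lemma mem_of_forall_adj_mem {P : Set V} (hP : ∀ ⦃u v⦄, u ∈ P → S.Adj u v → v ∈ P)
    {u v : V} (w : S.Walk u v) (hu : u ∈ P) : v ∈ P := by
  induction w with
  | nil => exact hu
  | cons h _ ih => exact ih (hP hu h)

end Walk

open Walk

lemma exists_walk_of_preconnected_induce {s : Set V} (h : (S.induce s).Preconnected) {u v : V}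
    (hu : u ∈ s) (hv : v ∈ s) : ∃ w : S.Walk u v, ∀ x ∈ w.support, x ∈ s := by
  obtain ⟨w⟩ := h ⟨u, hu⟩ ⟨v, hv⟩
  let w' : S.Walk u v := w.map (Embedding.induce s).toHom
  refine ⟨w', fun x hx => ?_⟩
  obtain ⟨y, -, rfl⟩ := List.mem_map.mp (Walk.support_map _ w ▸ hx)
  exact y.2

lemma IsBipartite.exists_mem_iff_notMem (h : S.IsBipartite) :
    ∃ X : Set V, ∀ ⦃u v⦄, S.Adj u v → (u ∈ X ↔ v ∉ X) := by
  obtain ⟨X, Y, hXY⟩ := h.exists_isBipartiteWith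
  refine ⟨X, fun u v huv => ?_⟩
  rcases hXY.mem_of_adj huv with ⟨hu, hv⟩ | ⟨hu, hv⟩
  · exact iff_of_true hu (hXY.disjoint.notMem_of_mem_right hv)
  · exact iff_of_false (hXY.disjoint.notMem_of_mem_right hu) (not_not.mpr hv)

def OddCyclesAreTriangles (S : SimpleGraph V) : Prop :=
  ∀ ⦃u : V⦄ (c : S.Walk u u), c.IsCycle → Odd c.length → c.length = 3

structure IsBiconnectedOn (S : SimpleGraph V) (W : Set V) : Prop where
  mem_of_adj ⦃u v : V⦄ : S.Adj u v → u ∈ W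
  preconnected : (S.induce W).Preconnected
  preconnected_diff (z : V) : (S.induce (W \ {z})).Preconnected

def IsK4On (S : SimpleGraph V) (W : Set V) : Prop :=
  W.ncard = 4 ∧ ∀ u ∈ W, ∀ w ∈ W, u ≠ w → S.Adj u w

def IsK11nOn (S : SimpleGraph V) (W : Set V) : Prop :=
  ∃ a b, S.Adj a b ∧ (∀ x ∈ W, x ≠ a → x ≠ b → S.Adj a x ∧ S.Adj b x) ∧
    ∀ e ∈ S.edgeSet, a ∈ e ∨ b ∈ e

variable {W : Set V}

lemma IsBiconnectedOn.exists_walk_avoiding (hB : S.IsBiconnectedOn W) {z u v : V} (hu : u ∈ W)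
    (hv : v ∈ W) (huz : u ≠ z) (hvz : v ≠ z) : ∃ w : S.Walk u v, z ∉ w.support := by
  obtain ⟨w, hw⟩ := exists_walk_of_preconnected_induce (hB.preconnected_diff z) ⟨hu, huz⟩ ⟨hv, hvz⟩
  exact ⟨w, fun hz => (hw z hz).2 rfl⟩

lemma IsBiconnectedOn.isK11nOn_of_forall_adj (hB : S.IsBiconnectedOn W) {p q r : V}
    (hpq : S.Adj p q) (hqr : S.Adj q r) (hrp : S.Adj r p)
    (hout : ∀ z ∈ W, z ≠ p → z ≠ q → z ≠ r →
      S.Adj z p ∧ S.Adj z q ∧ ∀ y, S.Adj z y → y = p ∨ y = q) :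
    S.IsK11nOn W := by
  have hnbr : ∀ ⦃u v⦄, S.Adj u v → u ≠ p → u ≠ q → u ≠ r → v = p ∨ v = q :=
    fun u v huv hup huq hur => (hout u (hB.mem_of_adj huv) hup huq hur).2.2 v huv
  refine ⟨p, q, hpq, fun x hx hxp hxq => ?_, fun e he => ?_⟩
  · rcases eq_or_ne x r with rfl | hxr
    · exact ⟨hrp.symm, hqr⟩
    · obtain ⟨h₁, h₂, -⟩ := hout x hx hxp hxq hxr
      exact ⟨h₁.symm, h₂.symm⟩
  induction e using Sym2.ind with
  | h u v =>
  rw [mem_edgeSet] at he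
  simp only [Sym2.mem_iff]
  by_contra! h
  rcases eq_or_ne u r with rfl | hur
  · have := hnbr he.symm h.1.2.symm h.2.2.symm he.ne.symm
    tauto
  · have := hnbr he h.1.1.symm h.2.1.symm hur
    tauto

namespace OddCyclesAreTriangles

lemma length_add_eq_three (hS : S.OddCyclesAreTriangles) {u v : V} {Q : S.Walk u v}
    {R : S.Walk v u} (hQ : Q.IsPath) (hR : R.IsPath) (hd : Q.support.tail.Disjoint R.support.tail)
    (hn : 1 < Q.length ∨ 1 < R.length) (hodd : Odd (Q.length + R.length)) :
    Q.length + R.length = 3 := by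
  simpa using hS _ (hQ.isCycle_append hR hd hn) (by simpa using hodd)

lemma exists_triangle (hS : S.OddCyclesAreTriangles) (h : ¬ S.IsBipartite) :
    ∃ a b c, S.Adj a b ∧ S.Adj b c ∧ S.Adj c a := by
  obtain ⟨u, w, hw⟩ : ∃ u, ∃ w : S.Walk u u, Odd w.length := by
    simpa [two_colorable_iff_forall_loop_even, Nat.not_even_iff_odd] using h
  obtain ⟨v, d, hd, hodd⟩ := w.exists_isCycle_odd_length hw
  have h3 := hS d hd hodd
  refine ⟨d.getVert 0, d.getVert 1, d.getVert 2, d.adj_getVert_succ (by omega),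
    d.adj_getVert_succ (by omega), ?_⟩
  have := d.adj_getVert_succ (i := 2) (by omega)
  rw [show 2 + 1 = d.length by omega, getVert_length] at this
  simpa using this

lemma false_of_pentagon (hS : S.OddCyclesAreTriangles) {v₀ v₁ v₂ v₃ v₄ : V}
    (h₀₁ : S.Adj v₀ v₁) (h₁₂ : S.Adj v₁ v₂) (h₂₃ : S.Adj v₂ v₃) (h₃₄ : S.Adj v₃ v₄)
    (h₄₀ : S.Adj v₄ v₀) (h₀₂ : v₀ ≠ v₂) (h₀₃ : v₀ ≠ v₃) (h₁₃ : v₁ ≠ v₃) (h₁₄ : v₁ ≠ v₄)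
    (h₂₄ : v₂ ≠ v₄) : False := by
  have := hS (cons h₀₁ (cons h₁₂ (cons h₂₃ (cons h₃₄ (cons h₄₀ nil))))) ?_ (by simp [Nat.odd_iff])
  · simp at this
  simp [cons_isCycle_iff, h₀₁.ne, h₁₂.ne, h₂₃.ne, h₃₄.ne, h₄₀.ne, h₀₁.ne.symm, h₄₀.ne.symm, h₀₂,
    h₀₃, h₁₃, h₁₄, h₂₄, h₀₂.symm, h₀₃.symm]

/-- Closing `Q` as `x ⋯ t p x` or as `x ⋯ t o p x` gives cycles of consecutive lengths; the odd
one is a triangle, which forces `Q` to be a single edge. -/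
lemma adj_of_isPath (hS : S.OddCyclesAreTriangles) {x t o p : V} {Q : S.Walk x t}
    (hQ : Q.IsPath) (hto : S.Adj t o) (hop : S.Adj o p) (hpt : S.Adj p t) (hpx : S.Adj p x)
    (ho : o ∉ Q.support) (hp : p ∉ Q.support) (hxt : x ≠ t) : S.Adj x t := by
  have hx := hQ.start_notMem_support_tail
  have hox : o ≠ x := fun h => ho (h ▸ Q.start_mem_support)
  have hdisj : ∀ v ∈ Q.support.tail, v ≠ o ∧ v ≠ p ∧ v ≠ x := fun v hv =>
    ⟨fun h => ho (h ▸ List.mem_of_mem_tail hv), fun h => hp (h ▸ List.mem_of_mem_tail hv),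
      fun h => hx (h ▸ hv)⟩
  have h₁ : Odd (Q.length + 2) → Q.length + 2 = 3 :=
    hS.length_add_eq_three (R := cons hpt.symm (cons hpx nil)) hQ
      (by simp [hpt.ne', hxt.symm, hpx.ne]) (by simp [List.disjoint_right]; grind) (by simp)
  have h₂ : Odd (Q.length + 3) → Q.length + 3 = 3 :=
    hS.length_add_eq_three (R := cons hto (cons hop (cons hpx nil))) hQ
      (by simp [hto.ne, hpt.ne', hxt.symm, hop.ne, hox, hpx.ne])
      (by simp [List.disjoint_right]; grind) (by simp)
  rcases Nat.even_or_odd Q.length with he | ho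
  · exact absurd (eq_of_length_eq_zero (p := Q) (by have := h₂ (he.add_odd (by decide)); omega))
      hxt
  · exact adj_of_length_eq_one (p := Q) (by have := h₁ (ho.add_even (by decide)); omega)

/-- Closing `Q` as `x ⋯ t o' y x` or as `x ⋯ t o o' y x` gives cycles of consecutive lengths,
both longer than three. -/
lemma false_of_isPath (hS : S.OddCyclesAreTriangles) {x t o o' y : V} {Q : S.Walk x t}
    (hQ : Q.IsPath) (hto : S.Adj t o) (hoo' : S.Adj o o') (ho't : S.Adj o' t) (ho'y : S.Adj o' y)
    (hyx : S.Adj y x) (ho : o ∉ Q.support) (ho' : o' ∉ Q.support) (hy : y ∉ Q.support)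
    (hyt : y ≠ t) (hyo : y ≠ o) (hxt : x ≠ t) : False := by
  have hx := hQ.start_notMem_support_tail
  have hox : o ≠ x := fun h => ho (h ▸ Q.start_mem_support)
  have ho'x : o' ≠ x := fun h => ho' (h ▸ Q.start_mem_support)
  have hdisj : ∀ v ∈ Q.support.tail, v ≠ o ∧ v ≠ o' ∧ v ≠ y ∧ v ≠ x := fun v hv =>
    ⟨fun h => ho (h ▸ List.mem_of_mem_tail hv), fun h => ho' (h ▸ List.mem_of_mem_tail hv),
      fun h => hy (h ▸ List.mem_of_mem_tail hv), fun h => hx (h ▸ hv)⟩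
  have h₁ : Odd (Q.length + 3) → Q.length + 3 = 3 :=
    hS.length_add_eq_three (R := cons ho't.symm (cons ho'y (cons hyx nil))) hQ
      (by simp [ho't.ne', hyt.symm, hxt.symm, ho'y.ne, ho'x, hyx.ne])
      (by simp [List.disjoint_right]; grind) (by simp)
  have h₂ : Odd (Q.length + 4) → Q.length + 4 = 3 :=
    hS.length_add_eq_three (R := cons hto (cons hoo' (cons ho'y (cons hyx nil)))) hQ
      (by simp [hto.ne, ho't.ne', hyt.symm, hxt.symm, hoo'.ne, hyo.symm, hox, ho'y.ne, ho'x,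
        hyx.ne])
      (by simp [List.disjoint_right]; grind) (by simp)
  have hQ0 : Q.length ≠ 0 := fun h => hxt (eq_of_length_eq_zero h)
  rcases Nat.even_or_odd Q.length with he | ho
  · have := h₁ (he.add_odd (by decide)); omega
  · have := h₂ (ho.add_even (by decide)); omega

section Block

variable {a b c : V}

lemma adj_or_adj_of_adj (hS : S.OddCyclesAreTriangles) (hB : S.IsBiconnectedOn W) {p q r x : V}
    (hpq : S.Adj p q) (hqr : S.Adj q r) (hrp : S.Adj r p) (hxq : x ≠ q) (hxr : x ≠ r)
    (hxp : S.Adj x p) : S.Adj x q ∨ S.Adj x r := by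
  obtain ⟨w, hw⟩ := hB.exists_walk_avoiding (hB.mem_of_adj hxp) (hB.mem_of_adj hqr) hxp.ne hpq.ne'
  obtain ⟨t, ht, Q, hQ, hQw, hQT⟩ := w.exists_isPath_first_mem (T := {p, q, r}) (by simp)
  have hp : p ∉ Q.support := fun h => hw (hQw h)
  rcases ht with rfl | rfl | rfl
  · exact absurd Q.end_mem_support hp
  · exact Or.inl (hS.adj_of_isPath hQ hqr hrp hpq hxp.symm
      (fun h => hqr.ne' (hQT _ h (by simp))) hp hxq)
  · exact Or.inr (hS.adj_of_isPath hQ hqr.symm hpq.symm hrp.symm hxp.symm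
      (fun h => hqr.ne (hQT _ h (by simp))) hp hxr)

lemma not_adj_of_adj_adj (hS : S.OddCyclesAreTriangles) (hB : S.IsBiconnectedOn W)
    {p q r x y : V} (hpq : S.Adj p q) (hqr : S.Adj q r) (hrp : S.Adj r p) (hyp : S.Adj y p)
    (hyq : S.Adj y q) (hyr : y ≠ r) (hxp : x ≠ p) (hxq : x ≠ q) (hxr : x ≠ r) : ¬ S.Adj x y := by
  intro hxy
  obtain ⟨w, hw⟩ := hB.exists_walk_avoiding (hB.mem_of_adj hxy) (hB.mem_of_adj hpq) hxy.ne hyp.ne'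
  obtain ⟨t, ht, Q, hQ, hQw, hQT⟩ := w.exists_isPath_first_mem (T := {p, q, r}) (by simp)
  have hy : y ∉ Q.support := fun h => hw (hQw h)
  rcases ht with rfl | rfl | rfl
  · exact hS.false_of_isPath hQ hrp.symm hqr.symm hpq.symm hyq.symm hxy.symm
      (fun h => hrp.ne (hQT _ h (by simp))) (fun h => hpq.ne' (hQT _ h (by simp))) hy hyp.ne hyr hxp
  · exact hS.false_of_isPath hQ hqr hrp hpq hyp.symm hxy.symm
      (fun h => hqr.ne' (hQT _ h (by simp))) (fun h => hpq.ne (hQT _ h (by simp))) hy hyq.ne hyr hxq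
  · exact hS.false_of_isPath hQ hqr.symm hpq.symm hrp.symm hyp.symm hxy.symm
      (fun h => hqr.ne (hQT _ h (by simp))) (fun h => hrp.ne' (hQT _ h (by simp))) hy hyr hyq.ne hxr

lemma adj_pair_of_adj (hS : S.OddCyclesAreTriangles) (hB : S.IsBiconnectedOn W) {z : V}
    (hab : S.Adj a b) (hbc : S.Adj b c) (hca : S.Adj c a) (hza : z ≠ a) (hzb : z ≠ b) (hzc : z ≠ c)
    (h : S.Adj z a ∨ S.Adj z b ∨ S.Adj z c) :
    S.Adj z a ∧ S.Adj z b ∨ S.Adj z b ∧ S.Adj z c ∨ S.Adj z c ∧ S.Adj z a := by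
  rcases h with h | h | h
  · rcases hS.adj_or_adj_of_adj hB hab hbc hca hzb hzc h with h' | h' <;> tauto
  · rcases hS.adj_or_adj_of_adj hB hbc hca hab hzc hza h with h' | h' <;> tauto
  · rcases hS.adj_or_adj_of_adj hB hca hab hbc hza hzb h with h' | h' <;> tauto

lemma eq_of_adj_of_adj (hS : S.OddCyclesAreTriangles) (hB : S.IsBiconnectedOn W) {z y : V}
    (hab : S.Adj a b) (hbc : S.Adj b c) (hca : S.Adj c a) (hza : z ≠ a) (hzb : z ≠ b) (hzc : z ≠ c)
    (h : S.Adj z a ∨ S.Adj z b ∨ S.Adj z c) (hzy : S.Adj z y) : y = a ∨ y = b ∨ y = c := by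
  by_contra! hy
  obtain ⟨hya, hyb, hyc⟩ := hy
  rcases hS.adj_pair_of_adj hB hab hbc hca hza hzb hzc h with ⟨h₁, h₂⟩ | ⟨h₁, h₂⟩ | ⟨h₁, h₂⟩
  · exact hS.not_adj_of_adj_adj hB hab hbc hca h₁ h₂ hzc hya hyb hyc hzy.symm
  · exact hS.not_adj_of_adj_adj hB hbc hca hab h₁ h₂ hza hyb hyc hya hzy.symm
  · exact hS.not_adj_of_adj_adj hB hca hab hbc h₁ h₂ hzb hyc hya hyb hzy.symm

lemma adj_of_mem (hS : S.OddCyclesAreTriangles) (hB : S.IsBiconnectedOn W) {z : V}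
    (hab : S.Adj a b) (hbc : S.Adj b c) (hca : S.Adj c a) (hz : z ∈ W) (hza : z ≠ a) (hzb : z ≠ b)
    (hzc : z ≠ c) : S.Adj z a ∨ S.Adj z b ∨ S.Adj z c := by
  let P : Set V := {v | v = a ∨ v = b ∨ v = c ∨ S.Adj v a ∨ S.Adj v b ∨ S.Adj v c}
  have hP : ∀ ⦃u v⦄, u ∈ P → S.Adj u v → v ∈ P := by
    intro u v hu huv
    by_cases hT : u = a ∨ u = b ∨ u = c
    · rcases hT with rfl | rfl | rfl <;> simp [P, huv.symm]
    push Not at hT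
    have hu' : S.Adj u a ∨ S.Adj u b ∨ S.Adj u c := by simpa [P, hT] using hu
    have := hS.eq_of_adj_of_adj hB hab hbc hca hT.1 hT.2.1 hT.2.2 hu' huv
    simp only [P, Set.mem_ofPred_eq]
    tauto
  obtain ⟨w, -⟩ := exists_walk_of_preconnected_induce hB.preconnected (hB.mem_of_adj hab) hz
  simpa [P, hza, hzb, hzc] using w.mem_of_forall_adj_mem hP (Or.inl rfl)

lemma isK4On_of_adj (hS : S.OddCyclesAreTriangles) (hB : S.IsBiconnectedOn W) {x : V}
    (hab : S.Adj a b) (hbc : S.Adj b c) (hca : S.Adj c a) (hx : x ∈ W) (hxa : x ≠ a) (hxb : x ≠ b)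
    (hxc : x ≠ c) (ha : S.Adj x a) (hb : S.Adj x b) (hc : S.Adj x c) : S.IsK4On W := by
  have hW : W = {a, b, c, x} := by
    refine Set.Subset.antisymm (fun z hz => ?_) ?_
    · by_contra! hzT
      simp only [Set.mem_insert_iff, Set.mem_singleton_iff, not_or] at hzT
      obtain ⟨hza, hzb, hzc, hzx⟩ := hzT
      rcases hS.adj_pair_of_adj hB hab hbc hca hza hzb hzc
        (hS.adj_of_mem hB hab hbc hca hz hza hzb hzc) with ⟨h₁, h₂⟩ | ⟨h₁, h₂⟩ | ⟨h₁, h₂⟩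
      · exact hS.false_of_pentagon ha h₁.symm h₂ hbc hc.symm (Ne.symm hzx) hxb hab.ne hca.ne' hzc
      · exact hS.false_of_pentagon hb h₁.symm h₂ hca ha.symm (Ne.symm hzx) hxc hbc.ne hab.ne' hza
      · exact hS.false_of_pentagon hc h₁.symm h₂ hab hb.symm (Ne.symm hzx) hxa hca.ne hbc.ne' hzb
    · simp [Set.insert_subset_iff, hB.mem_of_adj hab, hB.mem_of_adj hbc, hB.mem_of_adj hca, hx]
  subst hW
  refine ⟨?_, ?_⟩
  · rw [Set.ncard_insert_of_notMem (by simp [hab.ne, hca.ne', hxa.symm]),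
      Set.ncard_insert_of_notMem (by simp [hbc.ne, hxb.symm]),
      Set.ncard_insert_of_notMem (by simp [hxc.symm]), Set.ncard_singleton]
  · intro u hu w hw huw
    simp only [Set.mem_insert_iff, Set.mem_singleton_iff] at hu hw
    rcases hu with rfl | rfl | rfl | rfl <;> rcases hw with rfl | rfl | rfl | rfl <;>
      first | exact absurd rfl huw | assumption | exact Adj.symm ‹_›

lemma isK11nOn_of_adj (hS : S.OddCyclesAreTriangles) (hB : S.IsBiconnectedOn W) {x : V}
    (hab : S.Adj a b) (hbc : S.Adj b c) (hca : S.Adj c a) (hx : x ∈ W) (hxa : x ≠ a) (hxb : x ≠ b)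
    (hxc : x ≠ c) (ha : S.Adj x a) (hb : S.Adj x b) (hc : ¬ S.Adj x c) : S.IsK11nOn W := by
  refine hB.isK11nOn_of_forall_adj hab hbc hca fun z hz hza hzb hzc => ?_
  have hT := hS.adj_of_mem hB hab hbc hca hz hza hzb hzc
  have hzc' : ¬ S.Adj z c := by
    rintro h
    rcases eq_or_ne z x with rfl | hzx
    · exact hc h
    rcases hS.adj_pair_of_adj hB hab hbc hca hza hzb hzc hT with ⟨h₁, h₂⟩ | ⟨h₁, h₂⟩ | ⟨h₁, h₂⟩
    · exact hS.false_of_pentagon ha h₁.symm h hbc.symm hb.symm hzx.symm hxc hca.ne' hab.ne hzb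
    · exact hS.false_of_pentagon hb h₁.symm h hca ha.symm hzx.symm hxc hbc.ne hab.ne' hza
    · exact hS.false_of_pentagon ha h₂.symm h hbc.symm hb.symm hzx.symm hxc hca.ne' hab.ne hzb
  have hpair := hS.adj_pair_of_adj hB hab hbc hca hza hzb hzc hT
  refine ⟨by tauto, by tauto, fun y hy => ?_⟩
  rcases hS.eq_of_adj_of_adj hB hab hbc hca hza hzb hzc hT hy with h | h | rfl
  exacts [Or.inl h, Or.inr h, absurd hy hzc']

theorem isBipartite_or_isK4On_or_isK11nOn (hS : S.OddCyclesAreTriangles)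
    (hB : S.IsBiconnectedOn W) : S.IsBipartite ∨ S.IsK4On W ∨ S.IsK11nOn W := by
  by_cases hbip : S.IsBipartite
  · exact Or.inl hbip
  right
  obtain ⟨a, b, c, hab, hbc, hca⟩ := hS.exists_triangle hbip
  by_cases h3 : ∃ x ∈ W, x ≠ a ∧ x ≠ b ∧ x ≠ c ∧ S.Adj x a ∧ S.Adj x b ∧ S.Adj x c
  · obtain ⟨x, hx, hxa, hxb, hxc, ha, hb, hc⟩ := h3
    exact Or.inl (hS.isK4On_of_adj hB hab hbc hca hx hxa hxb hxc ha hb hc)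
  push Not at h3
  right
  by_cases h0 : ∃ x ∈ W, x ≠ a ∧ x ≠ b ∧ x ≠ c
  · obtain ⟨x, hx, hxa, hxb, hxc⟩ := h0
    rcases hS.adj_pair_of_adj hB hab hbc hca hxa hxb hxc
      (hS.adj_of_mem hB hab hbc hca hx hxa hxb hxc) with ⟨h₁, h₂⟩ | ⟨h₁, h₂⟩ | ⟨h₁, h₂⟩
    · exact hS.isK11nOn_of_adj hB hab hbc hca hx hxa hxb hxc h₁ h₂ (h3 x hx hxa hxb hxc h₁ h₂)
    · exact hS.isK11nOn_of_adj hB hbc hca hab hx hxb hxc hxa h₁ h₂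
        (fun h => h3 x hx hxa hxb hxc h h₁ h₂)
    · exact hS.isK11nOn_of_adj hB hca hab hbc hx hxc hxa hxb h₁ h₂
        (fun h => h3 x hx hxa hxb hxc h₂ h h₁)
  · push Not at h0
    exact hB.isK11nOn_of_forall_adj hab hbc hca fun z hz hza hzb hzc => absurd (h0 z hz hza hzb) hzc

end Block

end OddCyclesAreTriangles

end SimpleGraph

namespace SimpleGraph

lemma cycleGraph_adj_iff_val {m : ℕ} {x y : Fin (m + 2)} :
    (cycleGraph (m + 2)).Adj x y ↔
      x.val = y.val + 1 ∨ y.val = x.val + 1 ∨ x.val + m + 1 = y.val ∨ y.val + m + 1 = x.val := by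
  have hsub : ∀ x y : Fin (m + 2), x - y = 1 ↔ x.val = y.val + 1 ∨ x.val + m + 1 = y.val := by
    intro x y
    rw [Fin.ext_iff, Fin.val_one]
    rcases le_or_gt y x with h | h
    · rw [Fin.coe_sub_iff_le.mpr h]; omega
    · rw [Fin.coe_sub_iff_lt.mpr h]; omega
  rw [cycleGraph_adj, hsub, hsub]
  omega

lemma cycleGraph_cliqueFree_three {n : ℕ} (hn : 4 ≤ n) : (cycleGraph n).CliqueFree 3 := by
  obtain ⟨m, rfl⟩ : ∃ m, n = m + 2 := ⟨n - 2, by omega⟩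
  intro t ht
  obtain ⟨a, b, c, hab, hac, hbc, -⟩ := is3Clique_iff.mp ht
  rw [cycleGraph_adj_iff_val] at hab hac hbc
  omega

lemma chromNum_congr {α β : Type*} {G : SimpleGraph α} {H : SimpleGraph β} (f : G ≃g H) :
    chromNum G = chromNum H := by
  simp only [chromNum, colorable_congr f]

lemma chromNum_cycleGraph_of_odd {n : ℕ} (hn : 2 ≤ n) (hodd : Odd n) :
    chromNum (cycleGraph n) = 3 := by
  have h := chromaticNumber_cycleGraph_of_odd n hn hodd
  rw [(cycleGraph.tricoloring n hn).colorable.chromaticNumber_eq_sInf] at h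
  exact_mod_cast h

lemma cliqNum_lt_of_cliqueFree {α : Type*} {G : SimpleGraph α} {n : ℕ} (h : G.CliqueFree n) :
    cliqNum G < n := by
  obtain ⟨t, ht⟩ := G.exists_isNClique_cliqueNum
  by_contra hle
  exact h.mono (not_lt.mp hle) t ht

lemma not_isPerfect_of_embedding_cycleGraph {α : Type*} {H : SimpleGraph α} {n : ℕ} (hn : 5 ≤ n)
    (hodd : Odd n) (φ : cycleGraph n ↪g H) : ¬ IsPerfect H := by
  intro hH
  have hchrom : chromNum (H.induce (Set.range φ)) = 3 := by
    rw [← chromNum_congr φ.isoInduceRange, chromNum_cycleGraph_of_odd (by omega) hodd]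
  have hcliq : cliqNum (H.induce (Set.range φ)) < 3 :=
    cliqNum_lt_of_cliqueFree ((cycleGraph_cliqueFree_three (by omega)).comap
      φ.isoInduceRange.symm.isContained)
  have := hH (Set.range φ)
  omega

end SimpleGraph

namespace Multigraph

open SimpleGraph

variable {V E : Type*} {G : Multigraph V E} {F : Set E}

lemma nonempty_embedding_cycleGraph_lineGraph {n : ℕ} (hn : 3 ≤ n)
    (f : Copy (cycleGraph n) (G.simpleOn F)) : Nonempty (cycleGraph n ↪g G.lineGraph) := by
  obtain ⟨m, rfl⟩ : ∃ m, n = m + 2 := ⟨n - 2, by omega⟩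
  have hval : ∀ i : Fin (m + 2), (i + 1).val = if i.val = m + 1 then 0 else i.val + 1 := by
    intro i
    rw [Fin.val_add_one]
    simp [Fin.ext_iff]
  have hsucc : ∀ i : Fin (m + 2), (cycleGraph (m + 2)).Adj i (i + 1) := fun i =>
    cycleGraph_adj_iff_val.mpr (by have := hval i; split_ifs at this <;> omega)
  have hends : ∀ i, ∃ e, G.ends e = s(f i, f (i + 1)) := fun i =>
    let ⟨e, _, he⟩ := f.toHom.map_adj (hsucc i)
    ⟨e, he⟩
  choose e he using hends
  have hshare : ∀ i j, (∃ x, x ∈ G.ends (e i) ∧ x ∈ G.ends (e j)) ↔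
      i = j ∨ i = j + 1 ∨ j = i + 1 := by
    intro i j
    simp only [he, Sym2.mem_iff]
    constructor
    · rintro ⟨x, hx | hx, hy | hy⟩ <;> subst hx <;> have := f.injective hy <;> simp_all
    · rintro (rfl | rfl | rfl) <;> simp
  have hinj : Function.Injective e := by
    intro i j hij
    have h := congrArg G.ends hij
    rw [he, he, Sym2.eq_iff] at h
    rcases h with ⟨h, -⟩ | ⟨h₁, h₂⟩
    · exact f.injective h
    · have h₁ := congrArg Fin.val (f.injective h₁)
      have h₂ := congrArg Fin.val (f.injective h₂)
      rw [hval] at h₁ h₂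
      split_ifs at h₁ h₂ <;> omega
  refine ⟨⟨⟨e, hinj⟩, fun {i j} => ?_⟩⟩
  change (e i ≠ e j ∧ ∃ x, x ∈ G.ends (e i) ∧ x ∈ G.ends (e j)) ↔ _
  rw [hinj.ne_iff, hshare, cycleGraph_adj_iff_val, Fin.ext_iff, Fin.ext_iff, Fin.ext_iff, hval,
    hval]
  split_ifs <;> omega

lemma oddCyclesAreTriangles_simpleOn (hperf : IsPerfect G.lineGraph) (F : Set E) :
    (G.simpleOn F).OddCyclesAreTriangles := by
  intro u c hc hodd
  by_contra h3
  have h5 : 5 ≤ c.length := by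
    have := hc.three_le_length
    obtain ⟨k, hk⟩ := hodd
    omega
  obtain ⟨f⟩ := (cycleGraph_isContained_iff (by omega)).mpr ⟨u, c, hc, rfl⟩
  obtain ⟨φ⟩ := nonempty_embedding_cycleGraph_lineGraph (by omega) f
  exact not_isPerfect_of_embedding_cycleGraph h5 hodd φ hperf

lemma IsBiconnectedOn.simpleOn (h : G.IsBiconnectedOn F) :
    (G.simpleOn F).IsBiconnectedOn (G.supp F) where
  mem_of_adj := fun u _ ⟨e, he, hends⟩ => ⟨e, he, by simp [hends]⟩
  preconnected := h.1.preconnected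
  preconnected_diff := h.2

lemma ends_mem_edgeSet_simpleOn {e : E} (he : e ∈ F) : G.ends e ∈ (G.simpleOn F).edgeSet := by
  induction h : G.ends e using Sym2.ind with
  | h u v => exact ⟨e, he, h⟩

end Multigraph

theorem stmt_9_general {V E : Type*} (G : Multigraph V E)
    (hperf : IsPerfect (Multigraph.lineGraph G)) (F : Set E) (hF : G.IsBlock F) :
    -- the block is bipartite, or
    (∃ X : Set V, ∀ e ∈ F, ∀ u w : V, G.ends e = s(u, w) → (u ∈ X ↔ w ∉ X)) ∨
    -- the block is a `K₄` with possibly multiple edges, or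
    ((G.supp F).ncard = 4 ∧
      ∀ u ∈ G.supp F, ∀ w ∈ G.supp F, u ≠ w → G.EdgeBetweenOn F u w) ∨
    -- the block is a `K_{1,1,n}` with possibly multiple edges: two vertices `a, b`
    -- joined to each other and to every other vertex of the block, all remaining
    -- vertices forming an independent set.
    (∃ a b : V, a ≠ b ∧ a ∈ G.supp F ∧ b ∈ G.supp F ∧ G.EdgeBetweenOn F a b ∧
      (∀ x ∈ G.supp F, x ≠ a → x ≠ b →
        G.EdgeBetweenOn F a x ∧ G.EdgeBetweenOn F b x) ∧
      ∀ e ∈ F, a ∈ G.ends e ∨ b ∈ G.ends e) := by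
  have hB := hF.1.simpleOn
  rcases (G.oddCyclesAreTriangles_simpleOn hperf F).isBipartite_or_isK4On_or_isK11nOn hB with
    hbip | hK4 | ⟨a, b, hab, hx, hedge⟩
  · obtain ⟨X, hX⟩ := hbip.exists_mem_iff_notMem
    exact Or.inl ⟨X, fun e he u w hends => hX ⟨e, he, hends⟩⟩
  · exact Or.inr (Or.inl hK4)
  · exact Or.inr (Or.inr ⟨a, b, hab.ne, hB.mem_of_adj hab, hB.mem_of_adj hab.symm, hab, hx,
      fun e he => hedge _ (Multigraph.ends_mem_edgeSet_simpleOn he)⟩)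

/-- **Maffray's structure theorem.** Every block of a line perfect multigraph is
either bipartite, a `K₄` with possibly multiple edges, or a `K_{1,1,n}` with
possibly multiple edges. -/
theorem stmt_9 {V E : Type*} [Fintype V] [Fintype E] (G : Multigraph V E)
    (hperf : IsPerfect (Multigraph.lineGraph G)) (F : Set E) (hF : G.IsBlock F) :
    -- the block is bipartite, or
    (∃ X : Set V, ∀ e ∈ F, ∀ u w : V, G.ends e = s(u, w) → (u ∈ X ↔ w ∉ X)) ∨
    -- the block is a `K₄` with possibly multiple edges, or
    ((G.supp F).ncard = 4 ∧
      ∀ u ∈ G.supp F, ∀ w ∈ G.supp F, u ≠ w → G.EdgeBetweenOn F u w) ∨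
    -- the block is a `K_{1,1,n}` with possibly multiple edges: two vertices `a, b`
    -- joined to each other and to every other vertex of the block, all remaining
    -- vertices forming an independent set.
    (∃ a b : V, a ≠ b ∧ a ∈ G.supp F ∧ b ∈ G.supp F ∧ G.EdgeBetweenOn F a b ∧
      (∀ x ∈ G.supp F, x ≠ a → x ≠ b →
        G.EdgeBetweenOn F a x ∧ G.EdgeBetweenOn F b x) ∧
      ∀ e ∈ F, a ∈ G.ends e ∨ b ∈ G.ends e) :=
  stmt_9_general G hperf F hF
end

section
/- Let G = (V,E) be a multigraph on vertices v_1,…,v_n,a,b such that {v_1,…,v_n} is an independent set. If some vertex v_i is great in G, then no v_j with j ≠ i is big in G; and if some v_i is big in G, then no v_j with j ≠ i is great in G. -/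
open scoped Classical

namespace Multigraph

variable {V E : Type*}

/-- `t_G(x)`: the number of edges of the triangle on the vertices `a`, `b`, `x`,
i.e. of edges with both endpoints in `{a, b, x}`. -/
noncomputable def triCount (G : Multigraph V E) (a b x : V) : ℕ :=
  {e : E | ∀ y ∈ G.ends e, y = a ∨ y = b ∨ y = x}.ncard

/-- `x` is big (relative to `a`, `b`) if `t_G(x) ≥ max (d_G(a), d_G(b))`. -/
def Big (G : Multigraph V E) (a b x : V) : Prop :=
  max (G.degree a) (G.degree b) ≤ G.triCount a b x

/-- `x` is great (relative to `a`, `b`) if `t_G(x) > max (d_G(a), d_G(b))`. -/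
def Great (G : Multigraph V E) (a b x : V) : Prop :=
  max (G.degree a) (G.degree b) < G.triCount a b x

/-- The multigraph obtained from `G` by deleting the edges `e` and `q`. -/
def delete (G : Multigraph V E) (e q : E) : Multigraph V {r : E // r ≠ e ∧ r ≠ q} where
  ends r := G.ends r.1
  not_isDiag r := G.not_isDiag r.1

end Multigraph

/-!
For `x ≠ y` let `T_x`, `T_y` be the edge sets of the triangles on `a, b, x` and `a, b, y`, and
`A`, `B` the sets of edges at `a` and `b`. Since there are no loops, every edge of `T_x` meets `a`
or `b`, so `T_x ∪ T_y ⊆ A ∪ B`; an edge of `T_x ∩ T_y` has both ends in `{a, b}`, so it is an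
`ab`-edge and `T_x ∩ T_y ⊆ A ∩ B`. Hence
`t(x) + t(y) = |T_x ∪ T_y| + |T_x ∩ T_y| ≤ |A ∪ B| + |A ∩ B| = d(a) + d(b) ≤ 2 max (d(a), d(b))`,
which rules out `x` great and `y` big at the same time.
-/

namespace Multigraph

variable {V E : Type*} (G : Multigraph V E)

def incidentEdges (x : V) : Set E :=
  {e | x ∈ G.ends e}

def triangleEdges (a b x : V) : Set E :=
  {e | ∀ y ∈ G.ends e, y = a ∨ y = b ∨ y = x}

theorem degree_eq_ncard_incidentEdges (x : V) : G.degree x = (G.incidentEdges x).ncard :=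
  rfl

theorem triCount_eq_ncard_triangleEdges (a b x : V) :
    G.triCount a b x = (G.triangleEdges a b x).ncard :=
  rfl

theorem exists_mem_ends_ne (e : E) (w : V) : ∃ u ∈ G.ends e, u ≠ w := by
  have hdiag := G.not_isDiag e
  generalize G.ends e = z at hdiag ⊢
  induction z using Sym2.ind with
  | h p q =>
    rw [Sym2.mk_isDiag_iff] at hdiag
    by_cases hp : p = w
    · exact ⟨q, Sym2.mem_mk_right p q, fun hq => hdiag (hp.trans hq.symm)⟩
    · exact ⟨p, Sym2.mem_mk_left p q, hp⟩

variable {G}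

theorem mem_ends_of_forall_mem_ends_eq_or_eq {e : E} {a b : V}
    (h : ∀ y ∈ G.ends e, y = a ∨ y = b) : a ∈ G.ends e ∧ b ∈ G.ends e := by
  obtain ⟨u, hu, hua⟩ := G.exists_mem_ends_ne e a
  obtain ⟨w, hw, hwb⟩ := G.exists_mem_ends_ne e b
  have hub : u = b := (h u hu).resolve_left hua
  have hwa : w = a := (h w hw).resolve_right hwb
  exact ⟨hwa ▸ hw, hub ▸ hu⟩

variable (G)

theorem triangleEdges_subset_union (a b x : V) :
    G.triangleEdges a b x ⊆ G.incidentEdges a ∪ G.incidentEdges b := by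
  intro e he
  obtain ⟨u, hu, hux⟩ := G.exists_mem_ends_ne e x
  rcases he u hu with rfl | rfl | rfl
  · exact Or.inl hu
  · exact Or.inr hu
  · exact absurd rfl hux

theorem triangleEdges_inter_subset_inter {x y : V} (hxy : x ≠ y) (a b : V) :
    G.triangleEdges a b x ∩ G.triangleEdges a b y ⊆ G.incidentEdges a ∩ G.incidentEdges b := by
  rintro e ⟨hex, hey⟩
  refine mem_ends_of_forall_mem_ends_eq_or_eq fun z hz => ?_
  rcases hex z hz with h | h | rfl
  · exact Or.inl h
  · exact Or.inr h
  · exact (hey z hz).imp_right fun h => h.resolve_right hxy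

theorem triCount_add_triCount_le [Finite E] {x y : V} (hxy : x ≠ y) (a b : V) :
    G.triCount a b x + G.triCount a b y ≤ G.degree a + G.degree b := by
  simp only [triCount_eq_ncard_triangleEdges, degree_eq_ncard_incidentEdges]
  rw [← Set.ncard_union_add_ncard_inter (G.triangleEdges a b x),
    ← Set.ncard_union_add_ncard_inter (G.incidentEdges a)]
  exact add_le_add
    (Set.ncard_le_ncard <| Set.union_subset (G.triangleEdges_subset_union a b x)
      (G.triangleEdges_subset_union a b y))
    (Set.ncard_le_ncard <| G.triangleEdges_inter_subset_inter hxy a b)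

theorem not_big_of_great [Finite E] {a b x y : V} (hxy : x ≠ y) (hx : G.Great a b x) :
    ¬ G.Big a b y := by
  intro hy
  have := G.triCount_add_triCount_le hxy a b
  have := le_max_left (G.degree a) (G.degree b)
  have := le_max_right (G.degree a) (G.degree b)
  unfold Great at hx
  unfold Big at hy
  omega

end Multigraph

theorem stmt_12_general {V E : Type*} [Fintype E] (G : Multigraph V E)
    (n : ℕ) (v : Fin n → V) (a b : V)
    (hinj : Function.Injective v) :
    (∀ i : Fin n, G.Great a b (v i) → ∀ j : Fin n, j ≠ i → ¬ G.Big a b (v j)) ∧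
      (∀ i : Fin n, G.Big a b (v i) → ∀ j : Fin n, j ≠ i → ¬ G.Great a b (v j)) :=
  ⟨fun _ hi _ hji => G.not_big_of_great (hinj.ne hji.symm) hi,
    fun _ hi _ hji hj => G.not_big_of_great (hinj.ne hji) hj hi⟩

/-- In a multigraph on `v₁, …, vₙ, a, b` with `{v₁, …, vₙ}` independent:
if some `vᵢ` is great then no other `vⱼ` is big, and if some `vᵢ` is big then
no other `vⱼ` is great. -/
theorem stmt_12 {V E : Type*} [Fintype V] [Fintype E] (G : Multigraph V E)
    (n : ℕ) (v : Fin n → V) (a b : V)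
    (hab : a ≠ b) (hva : ∀ i, v i ≠ a) (hvb : ∀ i, v i ≠ b)
    (hinj : Function.Injective v)
    (hcover : ∀ x : V, x = a ∨ x = b ∨ ∃ i, x = v i)
    (hind : ∀ (e : E) (i j : Fin n), G.ends e ≠ s(v i, v j)) :
    (∀ i : Fin n, G.Great a b (v i) → ∀ j : Fin n, j ≠ i → ¬ G.Big a b (v j)) ∧
      (∀ i : Fin n, G.Big a b (v i) → ∀ j : Fin n, j ≠ i → ¬ G.Great a b (v j)) :=
  stmt_12_general G n v a b hinj
end
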